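/- Let p be an odd prime with p ≡ 5 or 7 (mod 8), and let i be an integer. Then Σ_{j=0}^{p-1} (j/p)·((i²+4ij+2j²)/p) = 0. -/

import Mathlib

/-!
Write `χ` for the quadratic character and `f x = x (x² + 4x + 2)`. For `i ≠ 0` the substitution
`j = (i / 2) x` turns the sum into `χ (i / 2) χ 2 · S` with `S = ∑ₓ χ (f x)`; for `i = 0` it is
`χ 2 · ∑ⱼ χ j = 0`. Now `-S` is the trace of Frobenius of the curve `y² = f x`, which has complex
multiplication by `√-2`, and it vanishes because `-2` is not a square. The `x`-coordinate
`g x = -(x² + 4x + 2) / (2x)` of the endomorphism `√-2` satisfies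
`f (g x) (4x²)² = -2 f x (x² - 2)²`, so `∑ₓ χ (f (g x))` is `χ (-2) S = -S` up to terms with
`x² = 2`. Counting the fibres of `g` through the discriminant of `x² + (4 + 2y) x + 2` evaluates the
same sum as `S` up to terms with `x² = 2`. The correction terms cancel since
`χ (x + 2) χ (x - 2) = χ (-2) = -1` there, so `2 S = 0`.
-/

open Finset

section QuadraticChar

variable {F : Type*} [Field F] [Fintype F] [DecidableEq F]

local notation "χ" => quadraticChar F

lemma quadraticChar_mul_sq {a b : F} (hb : b ≠ 0) : χ (a * b ^ 2) = χ a := by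
  rw [map_mul, quadraticChar_sq_one' hb, mul_one]

lemma quadraticChar_card_roots_quadratic (hF : ringChar F ≠ 2) (b c : F) :
    (#{x | x ^ 2 + b * x + c = 0} : ℤ) = χ (b ^ 2 - 4 * c) + 1 := by
  have h2 : (2 : F) ≠ 0 := Ring.two_ne_zero hF
  rw [← quadraticChar_card_sqrts hF, Nat.cast_inj]
  refine card_bij' (fun x _ => 2 * x + b) (fun y _ => (y - b) / 2) ?_ ?_ ?_ ?_
  · intro x hx
    simp only [mem_filter, mem_univ, true_and] at hx
    simp only [Set.mem_toFinset, Set.mem_ofPred_eq]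
    linear_combination 4 * hx
  · intro y hy
    simp only [Set.mem_toFinset, Set.mem_ofPred_eq] at hy
    simp only [mem_filter, mem_univ, true_and]
    field_simp
    linear_combination hy
  · intro x _
    field_simp
    ring
  · intro y _
    field_simp
    ring

end QuadraticChar

section CMCurve

variable {F : Type*} [Field F]

def cmCubic (x : F) : F := x * (x ^ 2 + 4 * x + 2)

/-- The `x`-coordinate of the degree-two endomorphism `√-2` of the curve `y² = cmCubic x`. -/
def cmIsogeny (x : F) : F := -(x ^ 2 + 4 * x + 2) / (2 * x)

lemma cmCubic_cmIsogeny_mul (h2 : (2 : F) ≠ 0) {x : F} (hx : x ≠ 0) :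
    cmCubic (cmIsogeny x) * (4 * x ^ 2) ^ 2 = -2 * cmCubic x * (x ^ 2 - 2) ^ 2 := by
  unfold cmCubic cmIsogeny
  field_simp
  ring

lemma cmIsogeny_eq_iff (h2 : (2 : F) ≠ 0) {x y : F} (hy : y ≠ 0) :
    cmIsogeny x = y ↔ x ^ 2 + (4 + 2 * y) * x + 2 = 0 := by
  rcases eq_or_ne x 0 with rfl | hx
  · simp [cmIsogeny, hy.symm, h2]
  · rw [cmIsogeny, div_eq_iff (mul_ne_zero h2 hx)]
    constructor <;> intro h <;> linear_combination -h

variable [Fintype F] [DecidableEq F]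

local notation "χ" => quadraticChar F

lemma quadraticChar_cmCubic_cmIsogeny (h2 : (2 : F) ≠ 0) (x : F) :
    χ (cmCubic (cmIsogeny x)) = χ (-2) * χ (cmCubic x) * χ (x ^ 2 - 2) ^ 2 := by
  rcases eq_or_ne x 0 with rfl | hx
  · simp [cmCubic, cmIsogeny]
  · have h4x : 4 * x ^ 2 ≠ 0 := by
      rw [show (4 : F) * x ^ 2 = (2 * x) ^ 2 by ring]
      exact pow_ne_zero 2 (mul_ne_zero h2 hx)
    rw [← quadraticChar_mul_sq h4x, cmCubic_cmIsogeny_mul h2 hx, map_mul, map_mul, map_pow]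

lemma card_cmIsogeny_fiber (hF : ringChar F ≠ 2) {y : F} (hy : y ≠ 0) :
    (#{x | cmIsogeny x = y} : ℤ) = χ (y ^ 2 + 4 * y + 2) + 1 := by
  have h2 : (2 : F) ≠ 0 := Ring.two_ne_zero hF
  rw [filter_congr fun x _ => cmIsogeny_eq_iff h2 hy, quadraticChar_card_roots_quadratic hF,
    show (4 + 2 * y) ^ 2 - 4 * 2 = (y ^ 2 + 4 * y + 2) * 2 ^ 2 by ring, quadraticChar_mul_sq h2]

lemma sum_quadraticChar_cmCubic_cmIsogeny_eq_mul (h2 : (2 : F) ≠ 0) :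
    ∑ x, χ (cmCubic (cmIsogeny x)) = χ (-2) * ∑ x, χ (cmCubic x) * χ (x ^ 2 - 2) ^ 2 := by
  simp_rw [quadraticChar_cmCubic_cmIsogeny h2, mul_sum, mul_assoc]

lemma sum_quadraticChar_cmCubic_cmIsogeny_eq_sum_fiberwise (hF : ringChar F ≠ 2) :
    ∑ x, χ (cmCubic (cmIsogeny x)) =
      ∑ x, χ (cmCubic x) + ∑ x, χ (x - 2) * χ (x ^ 2 - 2) ^ 2 := by
  have hfiber : ∀ y : F, (#{x | cmIsogeny x = y} : ℤ) * χ (cmCubic y) =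
      χ (cmCubic y) + χ y * χ (y ^ 2 + 4 * y + 2) ^ 2 := by
    intro y
    rcases eq_or_ne y 0 with rfl | hy
    · simp [cmCubic]
    · rw [card_cmIsogeny_fiber hF hy, cmCubic, map_mul]
      ring
  have hshift : ∑ y : F, χ y * χ (y ^ 2 + 4 * y + 2) ^ 2 =
      ∑ x : F, χ (x - 2) * χ (x ^ 2 - 2) ^ 2 := by
    rw [← Equiv.sum_comp (Equiv.subRight (2 : F))]
    refine sum_congr rfl fun x _ => ?_
    rw [Equiv.subRight_apply, show (x - 2) ^ 2 + 4 * (x - 2) + 2 = x ^ 2 - 2 by ring]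
  rw [← sum_fiberwise' univ cmIsogeny fun y => χ (cmCubic y), ← hshift, ← sum_add_distrib]
  simp only [sum_const, nsmul_eq_mul, hfiber]

lemma quadraticChar_cmCubic_add_mul_sq (hχ : χ (-2) = -1) (x : F) :
    (χ (cmCubic x) + χ (x - 2)) * χ (x ^ 2 - 2) ^ 2 = χ (cmCubic x) + χ (x - 2) := by
  rcases eq_or_ne (x ^ 2 - 2) 0 with hx | hx
  · rw [hx, quadraticChar_zero, zero_pow two_ne_zero, mul_zero, eq_comm]
    have hprod : χ (cmCubic x) * χ (x - 2) = -1 := by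
      rw [← map_mul, show cmCubic x * (x - 2) = (-2) ^ 3 by
        unfold cmCubic; linear_combination (x ^ 2 + 2 * x - 4) * hx, map_pow, hχ]
      norm_num
    rcases Int.eq_one_or_neg_one_of_mul_eq_neg_one' hprod with ⟨h₁, h₂⟩ | ⟨h₁, h₂⟩ <;> omega
  · rw [quadraticChar_sq_one hx, mul_one]

theorem sum_quadraticChar_cmCubic_eq_zero (hF : ringChar F ≠ 2) (hχ : χ (-2) = -1) :
    ∑ x, χ (cmCubic x) = 0 := by
  have hA := sum_quadraticChar_cmCubic_cmIsogeny_eq_mul (Ring.two_ne_zero hF)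
  have hB := sum_quadraticChar_cmCubic_cmIsogeny_eq_sum_fiberwise hF
  have hC : ∑ x, (χ (cmCubic x) + χ (x - 2)) * χ (x ^ 2 - 2) ^ 2 = ∑ x, χ (cmCubic x) := by
    have hshift : ∑ x : F, χ (x - 2) = 0 :=
      (Equiv.sum_comp (Equiv.subRight (2 : F)) χ).trans (quadraticChar_sum_zero hF)
    rw [sum_congr rfl fun x _ => quadraticChar_cmCubic_add_mul_sq hχ x, sum_add_distrib, hshift,
      add_zero]
  simp only [add_mul, sum_add_distrib] at hC
  rw [hχ] at hA
  linarith

theorem sum_quadraticChar_mul_quadraticChar_eq_zero (hF : ringChar F ≠ 2) (hχ : χ (-2) = -1)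
    (a : F) : ∑ b, χ b * χ (a ^ 2 + 4 * a * b + 2 * b ^ 2) = 0 := by
  have h2 : (2 : F) ≠ 0 := Ring.two_ne_zero hF
  rcases eq_or_ne a 0 with rfl | ha
  · have hterm : ∀ b : F, χ b * χ (0 ^ 2 + 4 * 0 * b + 2 * b ^ 2) = χ 2 * χ b := by
      intro b
      rcases eq_or_ne b 0 with rfl | hb
      · simp
      · rw [show (0 : F) ^ 2 + 4 * 0 * b + 2 * b ^ 2 = 2 * b ^ 2 by ring,
          quadraticChar_mul_sq hb, mul_comm]
    rw [sum_congr rfl fun b _ => hterm b, ← mul_sum, quadraticChar_sum_zero hF, mul_zero]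
  · have hc : a / 2 ≠ 0 := div_ne_zero ha h2
    have hterm : ∀ x : F, χ (a / 2 * x) * χ (a ^ 2 + 4 * a * (a / 2 * x) + 2 * (a / 2 * x) ^ 2) =
        χ (a / 2) * χ 2 * χ (cmCubic x) := by
      intro x
      rw [show a ^ 2 + 4 * a * (a / 2 * x) + 2 * (a / 2 * x) ^ 2 =
          2 * (x ^ 2 + 4 * x + 2) * (a / 2) ^ 2 by field_simp; ring,
        quadraticChar_mul_sq hc, cmCubic, map_mul, map_mul, map_mul]
      ring
    rw [← Equiv.sum_comp (Equiv.mulLeft₀ (a / 2) hc)]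
    simp only [Equiv.mulLeft₀_apply, hterm]
    rw [← mul_sum, sum_quadraticChar_cmCubic_eq_zero hF hχ, mul_zero]

end CMCurve

lemma ZMod.sum_range_natCast {M : Type*} [AddCommMonoid M] (n : ℕ) [NeZero n] (f : ZMod n → M) :
    ∑ j ∈ range n, f j = ∑ z, f z :=
  sum_nbij' (fun j => j) ZMod.val (fun _ _ => mem_univ _) (fun z _ => mem_range.2 z.val_lt)
    (fun _ hj => ZMod.val_natCast_of_lt (mem_range.1 hj)) (fun z _ => ZMod.natCast_zmod_val z)
    fun _ _ => rfl

lemma ZMod.quadraticChar_neg_two {p : ℕ} [Fact p.Prime] (hp : p % 8 = 5 ∨ p % 8 = 7) :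
    quadraticChar (ZMod p) (-2) = -1 := by
  rw [quadraticChar_neg_one_iff_not_isSquare, ZMod.exists_sq_eq_neg_two_iff (by omega)]
  omega

theorem stmt_4 (p : ℕ) [Fact p.Prime] (hp : p % 8 = 5 ∨ p % 8 = 7) (i : ℤ) :
    ∑ j ∈ Finset.range p,
        legendreSym p j * legendreSym p (i ^ 2 + 4 * i * j + 2 * j ^ 2) = 0 := by
  have hF : ringChar (ZMod p) ≠ 2 := by rw [ZMod.ringChar_zmod_n]; omega
  rw [← sum_quadraticChar_mul_quadraticChar_eq_zero hF (ZMod.quadraticChar_neg_two hp) (i : ZMod p),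
    ← ZMod.sum_range_natCast]
  refine sum_congr rfl fun j _ => ?_
  simp only [legendreSym]
  push_cast
  rfl
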